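/- arXiv:1302.3193 — 3 statements merged into one kernel-verified Lean document; each statement's English description precedes it below -/
import Mathlib

section
/- Let Ω ⊆ ℝ^{m+n} (m, n ≥ 2) be a domain and u : Ω → ℝ a function such that for each fixed y the slice x ↦ u(x,y) is subharmonic on Ω(y) = {x : (x,y) ∈ Ω}, and for each fixed x the slice y ↦ u(x,y) is harmonic on Ω(x) = {y : (x,y) ∈ Ω}. Then u is Lebesgue measurable on Ω. -/
open MeasureTheory Metric Filter Topology
open scoped ENNReal

noncomputable section

/-- `Euc d` is Euclidean space `ℝ^d`. -/
abbrev Euc (d : ℕ) := EuclideanSpace ℝ (Fin d)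

/-- Subharmonic on an open set: upper semicontinuous and satisfying the
sub-mean-value inequality over balls whose closure lies in the set. -/
def IsSubharmonicOn {d : ℕ} (U : Set (Euc d)) (f : Euc d → ℝ) : Prop :=
  UpperSemicontinuousOn f U ∧
    ∀ c ∈ U, ∀ r : ℝ, 0 < r → closedBall c r ⊆ U → f c ≤ ⨍ z in ball c r, f z

/-- Harmonic on an open set: continuous and satisfying the mean value equality. -/
def IsHarmonicOn {d : ℕ} (U : Set (Euc d)) (f : Euc d → ℝ) : Prop :=
  ContinuousOn f U ∧
    ∀ c ∈ U, ∀ r : ℝ, 0 < r → closedBall c r ⊆ U → f c = ⨍ z in ball c r, f z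

/-- Gluing a point of `ℝ^m` and a point of `ℝ^n` into a point of `ℝ^(m+n)`. -/
def glue {m n : ℕ} (x : Euc m) (y : Euc n) : Euc (m + n) :=
  WithLp.toLp 2 (fun i => Fin.addCases (motive := fun _ => ℝ) (fun i => x i) (fun j => y j) i)

/-- The slice `Ω(y) = {x : (x,y) ∈ Ω}`. -/
def sliceY {m n : ℕ} (Ω : Set (Euc (m + n))) (y : Euc n) : Set (Euc m) :=
  {x | glue x y ∈ Ω}

/-- The slice `Ω(x) = {y : (x,y) ∈ Ω}`. -/
def sliceX {m n : ℕ} (Ω : Set (Euc (m + n))) (x : Euc m) : Set (Euc n) :=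
  {y | glue x y ∈ Ω}



/-- Splitting a point of `ℝ^(m+n)` into points of `ℝ^m` and `ℝ^n`. -/
def split {m n : ℕ} (z : Euc (m + n)) : Euc m × Euc n :=
  (WithLp.toLp 2 (fun i => z (Fin.castAdd n i)), WithLp.toLp 2 (fun j => z (Fin.natAdd m j)))

lemma glue_split {m n : ℕ} (z : Euc (m + n)) : glue (split z).1 (split z).2 = z := by
  ext i
  refine Fin.addCases (motive := fun i => glue (split z).1 (split z).2 i = z i)
    (fun i => ?_) (fun j => ?_) i
  · simp [glue, split, Fin.addCases_left]
  · simp [glue, split, Fin.addCases_right]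

lemma continuous_glue {m n : ℕ} : Continuous fun p : Euc m × Euc n => glue p.1 p.2 := by
  have : (fun p : Euc m × Euc n => glue p.1 p.2) =
      (EuclideanSpace.equiv (Fin (m + n)) ℝ).symm ∘ fun p i => glue p.1 p.2 i := rfl
  rw [this]
  refine (EuclideanSpace.equiv (Fin (m + n)) ℝ).symm.continuous.comp (continuous_pi fun i => ?_)
  refine Fin.addCases (motive := fun i => Continuous fun p : Euc m × Euc n => glue p.1 p.2 i)
    (fun i => ?_) (fun j => ?_) i
  · simp only [glue, Fin.addCases_left]
    exact (EuclideanSpace.proj (𝕜 := ℝ) i).continuous.comp continuous_fst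
  · simp only [glue, Fin.addCases_right]
    exact (EuclideanSpace.proj (𝕜 := ℝ) j).continuous.comp continuous_snd

lemma continuous_split {m n : ℕ} : Continuous fun z : Euc (m + n) => split (m := m) (n := n) z := by
  refine Continuous.prodMk ?_ ?_
  · exact (EuclideanSpace.equiv (Fin m) ℝ).symm.continuous.comp
      (continuous_pi fun i => (EuclideanSpace.proj (𝕜 := ℝ) (Fin.castAdd n i)).continuous)
  · exact (EuclideanSpace.equiv (Fin n) ℝ).symm.continuous.comp
      (continuous_pi fun j => (EuclideanSpace.proj (𝕜 := ℝ) (Fin.natAdd m j)).continuous)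

lemma usc_restrict {d : ℕ} {f : Euc d → ℝ} {S V : Set (Euc d)}
    (hf : UpperSemicontinuousOn f S) (hV : IsOpen V) (hVS : V ⊆ S) :
    UpperSemicontinuous (V.restrict f) := by
  intro v a h
  have h1 : ∀ᶠ x in 𝓝[S] (v : Euc d), f x < a := hf v (hVS v.2) a h
  have h2 : ∀ᶠ x in 𝓝[V] (v : Euc d), f x < a := h1.filter_mono (nhdsWithin_mono _ hVS)
  rw [hV.nhdsWithin_eq v.2] at h2
  exact continuous_subtype_val.continuousAt.eventually h2

theorem stmt0' {m n : ℕ}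
    (Ω : Set (Euc (m + n))) (hΩo : IsOpen Ω)
    (u : Euc (m + n) → ℝ)
    (ha : ∀ y : Euc n, UpperSemicontinuousOn (fun x => u (glue x y)) (sliceY Ω y))
    (hb : ∀ x : Euc m, ContinuousOn (fun y => u (glue x y)) (sliceX Ω x)) :
    Measurable (Ω.indicator u) := by
  set u' : Euc m × Euc n → ℝ := fun p => u (glue p.1 p.2) with hu'
  set Ω' : Set (Euc m × Euc n) := (fun p : Euc m × Euc n => glue p.1 p.2) ⁻¹' Ω with hΩ'def
  have hΩ'o : IsOpen Ω' := hΩo.preimage continuous_glue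
  -- measurability over open rectangles
  have hrect : ∀ (V : Set (Euc m)) (W : Set (Euc n)), IsOpen V → IsOpen W →
      V ×ˢ W ⊆ Ω' → ∀ t : Set ℝ, MeasurableSet t →
      MeasurableSet ((V ×ˢ W) ∩ u' ⁻¹' t) := by
    intro V W hV hW hsub t ht
    have hunc : Measurable (Function.uncurry fun (w : W) (v : V) => u (glue ↑v ↑w)) := by
      apply measurable_uncurry_of_continuous_of_measurable
      · intro v
        have hcont : ContinuousOn (fun y => u (glue (↑v : Euc m) y)) W :=
          (hb v).mono (fun y hy => hsub (Set.mk_mem_prod v.2 hy))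
        exact continuousOn_iff_continuous_restrict.mp hcont
      · intro w
        have husc : UpperSemicontinuous (V.restrict fun x => u (glue x (↑w : Euc n))) :=
          usc_restrict (ha w) hV (fun x hx => hsub (Set.mk_mem_prod hx w.2))
        exact husc.measurable
    have hg : Measurable fun p : (V ×ˢ W : Set (Euc m × Euc n)) =>
        ((⟨(p : Euc m × Euc n).2, p.2.2⟩ : W), (⟨(p : Euc m × Euc n).1, p.2.1⟩ : V)) := by
      exact ((measurable_snd.comp measurable_subtype_coe).subtype_mk).prodMk
        ((measurable_fst.comp measurable_subtype_coe).subtype_mk)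
    have hres : Measurable fun p : (V ×ˢ W : Set (Euc m × Euc n)) => u' ↑p := hunc.comp hg
    have himg := (hV.measurableSet.prod hW.measurableSet).subtype_image (hres ht)
    have : (Subtype.val '' ((fun p : (V ×ˢ W : Set (Euc m × Euc n)) => u' ↑p) ⁻¹' t)) =
        (V ×ˢ W) ∩ u' ⁻¹' t := by
      rw [show ((fun p : (V ×ˢ W : Set (Euc m × Euc n)) => u' ↑p) ⁻¹' t) =
        Subtype.val ⁻¹' (u' ⁻¹' t) from rfl]
      exact Subtype.image_preimage_coe _ _
    rwa [this] at himg
  -- countable cover of Ω' by open rectangles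
  obtain ⟨b1, hb1c, -, hb1⟩ := TopologicalSpace.exists_countable_basis (Euc m)
  obtain ⟨b2, hb2c, -, hb2⟩ := TopologicalSpace.exists_countable_basis (Euc n)
  obtain ⟨S, hSsub, hSeq⟩ := (hb1.prod hb2).open_eq_sUnion hΩ'o
  have hScount : S.Countable := (hb1c.image2 hb2c _).mono hSsub
  have hmeasΩ't : ∀ t : Set ℝ, MeasurableSet t → MeasurableSet (Ω' ∩ u' ⁻¹' t) := by
    intro t ht
    have heq : Ω' ∩ u' ⁻¹' t = ⋃ R ∈ S, R ∩ u' ⁻¹' t := by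
      rw [hSeq, Set.sUnion_eq_biUnion, Set.iUnion₂_inter]
    rw [heq]
    refine MeasurableSet.biUnion hScount fun R hR => ?_
    obtain ⟨V, hV1, W, hW2, rfl⟩ := hSsub hR
    have hRsub : V ×ˢ W ⊆ Ω' := hSeq ▸ Set.subset_sUnion_of_mem hR
    exact hrect V W (hb1.isOpen hV1) (hb2.isOpen hW2) hRsub t ht
  have hind : Measurable (Ω'.indicator u') := by
    intro t ht
    have heq : Ω'.indicator u' ⁻¹' t =
        (Ω' ∩ u' ⁻¹' t) ∪ (Ω'ᶜ ∩ {p | (0 : ℝ) ∈ t}) := by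
      ext p
      by_cases hp : p ∈ Ω' <;>
        simp [Set.indicator_of_mem, Set.indicator_of_notMem, hp]
    rw [heq]
    refine (hmeasΩ't t ht).union (hΩ'o.measurableSet.compl.inter ?_)
    by_cases h0 : (0 : ℝ) ∈ t <;> simp [h0]
  have hfinal : Ω.indicator u = (Ω'.indicator u') ∘ split := by
    funext z
    have hz := glue_split z
    by_cases h : z ∈ Ω
    · have h' : split z ∈ Ω' := by
        simp only [hΩ'def, Set.mem_preimage, hz]; exact h
      rw [Function.comp_apply, Set.indicator_of_mem h, Set.indicator_of_mem h']
      simp only [hu', hz]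
    · have h' : split z ∉ Ω' := by
        simp only [hΩ'def, Set.mem_preimage, hz]; exact h
      rw [Function.comp_apply, Set.indicator_of_notMem h, Set.indicator_of_notMem h']
  rw [hfinal]
  exact hind.comp continuous_split.measurable


/-- a function on a domain in `ℝ^(m+n)` which is subharmonic in the
first variable and harmonic in the second is Lebesgue measurable. -/
theorem stmt0 {m n : ℕ} (hm : 2 ≤ m) (hn : 2 ≤ n)
    (Ω : Set (Euc (m + n))) (hΩo : IsOpen Ω) (hΩc : IsConnected Ω)
    (u : Euc (m + n) → ℝ)
    (ha : ∀ y : Euc n, IsSubharmonicOn (sliceY Ω y) (fun x => u (glue x y)))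
    (hb : ∀ x : Euc m, IsHarmonicOn (sliceX Ω x) (fun y => u (glue x y))) :
    Measurable (Ω.indicator u) := by
  exact stmt0' Ω hΩo u (fun y => (ha y).1) (fun x => (hb x).1)
end
end

section
/- Let Ω ⊆ ℝ^{m+n} be a domain, K ≥ 1, and u : Ω → ℝ with: (a) each slice x ↦ u(x,y) is K-quasinearly subharmonic on Ω(y); (b) each slice y ↦ u(x,y) is harmonic on Ω(x); (c) there is a nonnegative φ ∈ L¹_loc(Ω) with −φ ≤ u. Then u⁺ = max(u,0) is locally integrable on Ω. -/
open MeasureTheory Metric Filter Topology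
open scoped ENNReal

noncomputable section

/-- `K`-quasinearly subharmonic on `U`: measurable (on `U`), positive part locally
integrable on `U`, and every nonnegative truncation `f_M = max(f,-M)+M` satisfies the
`K`-sub-mean-value inequality over balls whose closure lies in `U`. -/
def IsQNSOn {d : ℕ} (K : ℝ) (U : Set (Euc d)) (f : Euc d → ℝ) : Prop :=
  Measurable (U.indicator f) ∧
  LocallyIntegrableOn (fun x => max (f x) 0) U volume ∧
  ∀ M : ℝ, 0 ≤ M → ∀ c ∈ U, ∀ r : ℝ, 0 < r → closedBall c r ⊆ U →
    max (f c) (-M) + M ≤ K * ⨍ z in ball c r, (max (f z) (-M) + M)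

lemma dist_glue_sq {m n : ℕ} (x x' : Euc m) (y y' : Euc n) :
    dist (glue x y) (glue x' y') ^ 2 = dist x x' ^ 2 + dist y y' ^ 2 := by
  have h1 : ∀ {d : ℕ} (a b : Euc d), dist a b ^ 2 = ∑ i, dist (a i) (b i) ^ 2 := by
    intro d a b
    rw [EuclideanSpace.dist_eq, Real.sq_sqrt (by positivity)]
  rw [h1, h1, h1, Fin.sum_univ_add]
  simp [glue]

lemma dist_left_le {m n : ℕ} (x x' : Euc m) (y y' : Euc n) :
    dist x x' ≤ dist (glue x y) (glue x' y') := by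
  have h := dist_glue_sq x x' y y'
  nlinarith [dist_nonneg (x := x) (y := x'), dist_nonneg (x := y) (y := y'),
    dist_nonneg (x := glue x y) (y := glue x' y'), sq_nonneg (dist y y')]

lemma dist_right_le {m n : ℕ} (x x' : Euc m) (y y' : Euc n) :
    dist y y' ≤ dist (glue x y) (glue x' y') := by
  have h := dist_glue_sq x x' y y'
  nlinarith [dist_nonneg (x := x) (y := x'), dist_nonneg (x := y) (y := y'),
    dist_nonneg (x := glue x y) (y := glue x' y')]

lemma dist_glue_le {m n : ℕ} (x x' : Euc m) (y y' : Euc n) :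
    dist (glue x y) (glue x' y') ≤ dist x x' + dist y y' := by
  have h := dist_glue_sq x x' y y'
  nlinarith [dist_nonneg (x := x) (y := x'), dist_nonneg (x := y) (y := y'),
    dist_nonneg (x := glue x y) (y := glue x' y')]

lemma isometry_glue_left {m n : ℕ} (x : Euc m) : Isometry (fun y : Euc n => glue x y) := by
  intro y y'
  have h := dist_glue_sq x x y y'
  simp only [dist_self] at h
  simp only [edist_dist]
  congr 1
  nlinarith [dist_nonneg (x := glue x y) (y := glue x y'), dist_nonneg (x := y) (y := y')]

def glueEquiv (m n : ℕ) : (Euc m × Euc n) ≃ᵐ Euc (m + n) :=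
  ((MeasurableEquiv.toLp 2 (Fin m → ℝ)).symm.prodCongr
      (MeasurableEquiv.toLp 2 (Fin n → ℝ)).symm).trans <|
    ((MeasurableEquiv.sumPiEquivProdPi (fun _ : Fin m ⊕ Fin n => ℝ)).symm).trans <|
      (MeasurableEquiv.piCongrLeft (fun _ : Fin (m + n) => ℝ) finSumFinEquiv).trans
        (MeasurableEquiv.toLp 2 (Fin (m + n) → ℝ)).symm.symm

lemma glueEquiv_apply {m n : ℕ} (q : Euc m × Euc n) : glueEquiv m n q = glue q.1 q.2 := by
  ext i
  refine Fin.addCases (fun i => ?_) (fun j => ?_) i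
  · rw [show glue q.1 q.2 (Fin.castAdd n i) = q.1 i by simp [glue],
      ← finSumFinEquiv_apply_left i]
    simp [glueEquiv, MeasurableEquiv.piCongrLeft, Equiv.piCongrLeft_apply_apply,
      MeasurableEquiv.sumPiEquivProdPi, Equiv.sumPiEquivProdPi,
      MeasurableEquiv.coe_toLp, MeasurableEquiv.coe_toLp_symm, MeasurableEquiv.prodCongr, -finSumFinEquiv_apply_left]
  · rw [show glue q.1 q.2 (Fin.natAdd m j) = q.2 j by simp [glue],
      ← finSumFinEquiv_apply_right j]
    simp [glueEquiv, MeasurableEquiv.piCongrLeft, Equiv.piCongrLeft_apply_apply,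
      MeasurableEquiv.sumPiEquivProdPi, Equiv.sumPiEquivProdPi,
      MeasurableEquiv.coe_toLp, MeasurableEquiv.coe_toLp_symm, MeasurableEquiv.prodCongr, -finSumFinEquiv_apply_right]

lemma measurePreserving_glueEquiv (m n : ℕ) :
    MeasurePreserving (glueEquiv m n) (volume.prod volume) volume := by
  have h1 : MeasurePreserving
      ((MeasurableEquiv.toLp 2 (Fin m → ℝ)).symm.prodCongr
        (MeasurableEquiv.toLp 2 (Fin n → ℝ)).symm)
      (volume.prod volume) (volume.prod volume) :=
    (EuclideanSpace.volume_preserving_symm_measurableEquiv_toLp (Fin m)).prod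
      (EuclideanSpace.volume_preserving_symm_measurableEquiv_toLp (Fin n))
  have h2 : MeasurePreserving
      (MeasurableEquiv.sumPiEquivProdPi (fun _ : Fin m ⊕ Fin n => ℝ)).symm volume volume :=
    volume_measurePreserving_sumPiEquivProdPi_symm _
  have h3 : MeasurePreserving
      (MeasurableEquiv.piCongrLeft (fun _ : Fin (m + n) => ℝ) finSumFinEquiv) volume volume :=
    volume_measurePreserving_piCongrLeft _ _
  have h4 : MeasurePreserving
      (MeasurableEquiv.toLp 2 (Fin (m + n) → ℝ)).symm.symm volume volume :=
    (EuclideanSpace.volume_preserving_symm_measurableEquiv_toLp (Fin (m + n))).symm _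
  exact (((h4.comp h3).comp h2).comp h1 : _)

lemma tendsto_clamp (t : ℝ) :
    Tendsto (fun M : ℕ => max (min t (M : ℝ)) (-(M : ℝ))) atTop (𝓝 t) := by
  refine Tendsto.congr' ?_ (tendsto_const_nhds : Tendsto (fun _ : ℕ => t) atTop (𝓝 t))
  filter_upwards [eventually_ge_atTop ⌈|t|⌉₊] with M hM
  have h1 : |t| ≤ (M : ℝ) := le_trans (Nat.le_ceil _) (Nat.cast_le.mpr hM)
  have h2 : t ≤ (M : ℝ) := le_trans (le_abs_self t) h1
  have h3 : -(M : ℝ) ≤ t := by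
    have := neg_abs_le t; linarith
  rw [min_eq_left h2, max_eq_left h3]

lemma setAvg_mono {d : ℕ} {s : Set (Euc d)} (f g : Euc d → ℝ)
    (hf0 : 0 ≤ᵐ[volume.restrict s] f) (hfg : f ≤ᵐ[volume.restrict s] g)
    (hg : IntegrableOn g s volume) : ⨍ z in s, f z ≤ ⨍ z in s, g z := by
  rw [setAverage_eq, setAverage_eq, smul_eq_mul, smul_eq_mul]
  exact mul_le_mul_of_nonneg_left (integral_mono_of_nonneg hf0 hg hfg) (by positivity)

lemma setAvg_nonneg {d : ℕ} {s : Set (Euc d)} (f : Euc d → ℝ)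
    (hf0 : ∀ z, 0 ≤ f z) : 0 ≤ ⨍ z in s, f z := by
  rw [setAverage_eq, smul_eq_mul]
  have : 0 ≤ ∫ z in s, f z := integral_nonneg fun z => hf0 z
  positivity

lemma setAvg_ball_le {d : ℕ} (hd : 0 < d) (c c₀ : Euc d) {R : ℝ} (hR : 0 < R)
    (hsub : ball c R ⊆ ball c₀ (2 * R)) (f : Euc d → ℝ) (hf0 : ∀ z, 0 ≤ f z)
    (hfi : IntegrableOn f (ball c₀ (2 * R)) volume) :
    ⨍ z in ball c R, f z ≤ 2 ^ d * ⨍ z in ball c₀ (2 * R), f z := by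
  haveI : Nontrivial (Euc d) :=
    nontrivial_of_ne (EuclideanSpace.single ⟨0, hd⟩ (1 : ℝ)) 0 (by
      intro h
      have := congrArg (fun v : Euc d => v ⟨0, hd⟩) h
      simp [EuclideanSpace.single_apply] at this)
  have hvol1 : (volume (ball c R)).toReal
      = R ^ d * (volume (ball (0 : Euc d) 1)).toReal := by
    rw [Measure.addHaar_ball _ _ hR.le, finrank_euclideanSpace_fin,
      ENNReal.toReal_mul, ENNReal.toReal_ofReal (by positivity)]
  have hvol2 : (volume (ball c₀ (2 * R))).toReal
      = (2 * R) ^ d * (volume (ball (0 : Euc d) 1)).toReal := by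
    rw [Measure.addHaar_ball _ _ (by positivity), finrank_euclideanSpace_fin,
      ENNReal.toReal_mul, ENNReal.toReal_ofReal (by positivity)]
  set a := (volume (ball (0 : Euc d) 1)).toReal with ha
  have ha0 : 0 < a := by
    rw [ha]
    exact ENNReal.toReal_pos (measure_ball_pos volume _ one_pos).ne'
      (measure_ball_lt_top).ne
  have hIle : ∫ z in ball c R, f z ≤ ∫ z in ball c₀ (2 * R), f z := by
    refine setIntegral_mono_set hfi ?_ (HasSubset.Subset.eventuallyLE hsub)
    exact Eventually.of_forall fun z => hf0 z
  have hI0 : 0 ≤ ∫ z in ball c₀ (2 * R), f z :=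
    setIntegral_nonneg measurableSet_ball fun z _ => hf0 z
  rw [setAverage_eq, setAverage_eq, smul_eq_mul, smul_eq_mul, measureReal_def, measureReal_def, hvol1, hvol2]
  have hkey : (2 : ℝ) ^ d * ((2 * R) ^ d * a)⁻¹ = (R ^ d * a)⁻¹ := by
    rw [mul_pow]
    field_simp
  calc (R ^ d * a)⁻¹ * ∫ z in ball c R, f z
      ≤ (R ^ d * a)⁻¹ * ∫ z in ball c₀ (2 * R), f z :=
        mul_le_mul_of_nonneg_left hIle (by positivity)
    _ = 2 ^ d * (((2 * R) ^ d * a)⁻¹ * ∫ z in ball c₀ (2 * R), f z) := by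
        rw [← mul_assoc, hkey]

lemma setAvg_mono2 {d : ℕ} {s : Set (Euc d)} (f g : Euc d → ℝ)
    (hf : IntegrableOn f s volume) (hg : IntegrableOn g s volume)
    (h : ∀ z, f z ≤ g z) : ⨍ z in s, f z ≤ ⨍ z in s, g z := by
  rw [setAverage_eq, setAverage_eq, smul_eq_mul, smul_eq_mul]
  exact mul_le_mul_of_nonneg_left (integral_mono hf hg h) (by positivity)

lemma setAvg_const_mul {d : ℕ} {s : Set (Euc d)} (c : ℝ) (f : Euc d → ℝ) :
    ⨍ z in s, c * f z = c * ⨍ z in s, f z := by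
  rw [setAverage_eq, setAverage_eq, integral_const_mul, smul_eq_mul, smul_eq_mul]
  ring

set_option maxHeartbeats 1000000 in
/-- a function quasinearly subharmonic in the first variable, harmonic in
the second, and bounded below by `-φ` with `φ ≥ 0` locally integrable, has locally
integrable positive part. -/
theorem stmt1 {m n : ℕ} (hm : 2 ≤ m) (hn : 2 ≤ n) (K : ℝ) (hK : 1 ≤ K)
    (Ω : Set (Euc (m + n))) (hΩo : IsOpen Ω) (hΩc : IsConnected Ω)
    (u : Euc (m + n) → ℝ)
    (ha : ∀ y : Euc n, IsQNSOn K (sliceY Ω y) (fun x => u (glue x y)))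
    (hb : ∀ x : Euc m, IsHarmonicOn (sliceX Ω x) (fun y => u (glue x y)))
    (φ : Euc (m + n) → ℝ) (hφ0 : ∀ p ∈ Ω, 0 ≤ φ p)
    (hφint : LocallyIntegrableOn φ Ω volume)
    (hlow : ∀ p ∈ Ω, -φ p ≤ u p) :
    LocallyIntegrableOn (fun p => max (u p) 0) Ω volume := by
  have hK0 : (0 : ℝ) ≤ K := le_trans zero_le_one hK
  intro p₀ hp₀
  obtain ⟨ε, hε, hball⟩ := Metric.isOpen_iff.mp hΩo p₀ hp₀
  set R : ℝ := ε / 9 with hRdef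
  have hR : 0 < R := by positivity
  have hΩR : ∀ p : Euc (m + n), dist p p₀ ≤ 8 * R → p ∈ Ω := by
    intro p hp
    apply hball
    rw [mem_ball]
    have : 8 * R < ε := by rw [hRdef]; linarith
    linarith
  set x₀ : Euc m := ((glueEquiv m n).symm p₀).1 with hx₀def
  set y₀ : Euc n := ((glueEquiv m n).symm p₀).2 with hy₀def
  have hp₀eq : glue x₀ y₀ = p₀ := by
    rw [← glueEquiv_apply]
    exact (glueEquiv m n).apply_symm_apply p₀
  have hmemΩ : ∀ (x : Euc m) (y : Euc n), dist x x₀ + dist y y₀ ≤ 8 * R → glue x y ∈ Ω := by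
    intro x y h
    apply hΩR
    calc dist (glue x y) p₀ = dist (glue x y) (glue x₀ y₀) := by rw [hp₀eq]
      _ ≤ dist x x₀ + dist y y₀ := dist_glue_le _ _ _ _
      _ ≤ 8 * R := h
  have hsliceXopen : ∀ x : Euc m, IsOpen (sliceX Ω x) := fun x =>
    hΩo.preimage (isometry_glue_left x).continuous
  -- continuity of the y-slices through points near x₀
  have hslice_cont : ∀ (z : Euc m), dist z x₀ < 2 * R →
      ContinuousOn (fun y' => u (glue z y')) (closedBall y₀ (2 * R)) := by
    intro z hz
    refine ((hb z).1).mono ?_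
    intro y' hy'
    exact hmemΩ z y' (by have := mem_closedBall.mp hy'; linarith)
  have hslice_int : ∀ (z : Euc m) (c : Euc n) (r : ℝ), dist z x₀ < 2 * R →
      closedBall c r ⊆ closedBall y₀ (2 * R) →
      IntegrableOn (fun y' => u (glue z y')) (ball c r) volume := by
    intro z c r hz hsub
    exact (((hslice_cont z hz).mono hsub).integrableOn_compact
      (isCompact_closedBall _ _)).mono_set ball_subset_closedBall
  have hslice_int_pos : ∀ (z : Euc m) (c : Euc n) (r : ℝ), dist z x₀ < 2 * R →
      closedBall c r ⊆ closedBall y₀ (2 * R) →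
      IntegrableOn (fun y' => max (u (glue z y')) 0) (ball c r) volume := by
    intro z c r hz hsub
    exact (((continuous_id.max continuous_const).comp_continuousOn
      ((hslice_cont z hz).mono hsub)).integrableOn_compact
      (isCompact_closedBall _ _)).mono_set ball_subset_closedBall
  -- STEP 1 : joint measurability via the Caratheodory argument
  obtain ⟨T, hTmeas, hTeq⟩ :
      ∃ T : Euc m × Euc n → ℝ, Measurable T ∧
        ∀ q : Euc m × Euc n, q.1 ∈ ball x₀ (4 * R) → q.2 ∈ ball y₀ (3 * R) →
          T q = u (glue q.1 q.2) := by
    classical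
    obtain ⟨ψ, hψdef⟩ : ∃ ψ : Euc n → ℝ, ψ = fun y => max 0 (min 1 (4 - dist y y₀ / R)) :=
      ⟨_, rfl⟩
    have hψcont : Continuous ψ := by
      rw [hψdef]
      exact continuous_const.max (continuous_const.min
        (continuous_const.sub ((continuous_id.dist continuous_const).div_const R)))
    have hψ01 : ∀ y, 0 ≤ ψ y ∧ ψ y ≤ 1 := fun y => by
      rw [hψdef]
      exact ⟨le_max_left _ _, max_le zero_le_one (min_le_left _ _)⟩
    have hψ1 : ∀ y, dist y y₀ < 3 * R → ψ y = 1 := by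
      intro y hy
      have h1 : dist y y₀ / R ≤ 3 := by
        rw [div_le_iff₀ hR]
        linarith
      have h2 : (1 : ℝ) ≤ 4 - dist y y₀ / R := by linarith
      rw [hψdef]
      simp only
      rw [min_eq_left h2, max_eq_right zero_le_one]
    have hψ0 : ∀ y, 4 * R ≤ dist y y₀ → ψ y = 0 := by
      intro y hy
      have h1 : (4 : ℝ) ≤ dist y y₀ / R := by
        rw [le_div_iff₀ hR]
        linarith
      have h2 : min 1 (4 - dist y y₀ / R) ≤ 0 := le_trans (min_le_right _ _) (by linarith)
      rw [hψdef]
      simp only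
      rw [max_eq_left h2]
    obtain ⟨F, hFdef⟩ : ∃ F : ℕ → Euc n → Euc m → ℝ, F = fun (M : ℕ) (y : Euc n) (x : Euc m) =>
      (ball x₀ (4 * R)).indicator
        (fun x' => ψ y * (sliceY Ω y).indicator
          (fun x'' => max (min (u (glue x'' y)) (M : ℝ)) (-(M : ℝ))) x') x := ⟨_, rfl⟩
    have hclampbd : ∀ (M : ℕ) (y : Euc n) (x : Euc m),
        |(sliceY Ω y).indicator
          (fun x'' => max (min (u (glue x'' y)) (M : ℝ)) (-(M : ℝ))) x| ≤ (M : ℝ) := by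
      intro M y x
      by_cases hmem : x ∈ sliceY Ω y
      · rw [Set.indicator_of_mem hmem, abs_le]
        constructor
        · exact le_max_right _ _
        · exact max_le (min_le_right _ _) (neg_nonpos_of_nonneg (Nat.cast_nonneg M)
            |>.trans (Nat.cast_nonneg M))
      · rw [Set.indicator_of_notMem hmem]
        simpa using Nat.cast_nonneg M
    have hFx : ∀ (M : ℕ) (y : Euc n), Measurable (fun x => F M y x) := by
      intro M y
      simp only [hFdef]
      apply Measurable.indicator _ measurableSet_ball
      apply Measurable.const_mul
      have heq : (sliceY Ω y).indicator
          (fun x'' => max (min (u (glue x'' y)) (M : ℝ)) (-(M : ℝ)))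
          = fun x'' => max (min ((sliceY Ω y).indicator (fun x' => u (glue x' y)) x'') (M : ℝ))
              (-(M : ℝ)) := by
        funext x''
        by_cases h : x'' ∈ sliceY Ω y
        · simp [Set.indicator_of_mem h]
        · rw [Set.indicator_of_notMem h, Set.indicator_of_notMem h,
            min_eq_left (Nat.cast_nonneg M), max_eq_left
              (neg_nonpos_of_nonneg (Nat.cast_nonneg M))]
      rw [heq]
      exact ((ha y).1.min measurable_const).max measurable_const
    have hFy : ∀ (M : ℕ) (x : Euc m), Continuous (fun y => F M y x) := by
      intro M x
      by_cases hx : x ∈ ball x₀ (4 * R)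
      · have hF1 : ∀ y, F M y x = ψ y * (sliceY Ω y).indicator
            (fun x'' => max (min (u (glue x'' y)) (M : ℝ)) (-(M : ℝ))) x := by
          intro y
          simp only [hFdef]
          rw [Set.indicator_of_mem hx]
        rw [continuous_iff_continuousAt]
        intro y₁
        by_cases hy : dist y₁ y₀ < 4 * R
        · have hV : ∀ y ∈ ball y₀ (4 * R), x ∈ sliceY Ω y := by
            intro y hy'
            have hx' : dist x x₀ < 4 * R := mem_ball.mp hx
            have hy'' := mem_ball.mp hy'
            exact hmemΩ x y (by linarith)
          have hu : ContinuousAt (fun y => u (glue x y)) y₁ :=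
            (hb x).1.continuousAt ((hsliceXopen x).mem_nhds (hV y₁ (mem_ball.mpr hy)))
          have hcont : ContinuousAt
              (fun y => ψ y * max (min (u (glue x y)) (M : ℝ)) (-(M : ℝ))) y₁ :=
            hψcont.continuousAt.mul
              ((((continuous_id.min continuous_const).max continuous_const).continuousAt).comp hu)
          refine hcont.congr ?_
          filter_upwards [isOpen_ball.mem_nhds (mem_ball.mpr hy)] with y hy'
          rw [hF1 y, Set.indicator_of_mem (hV y hy')]
        · have h0 : F M y₁ x = 0 := by
            rw [hF1 y₁, hψ0 y₁ (not_lt.mp hy), zero_mul]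
          have htend : Tendsto (fun y => F M y x) (𝓝 y₁) (𝓝 0) := by
            have h1 : Tendsto (fun y => (M : ℝ) * ψ y) (𝓝 y₁) (𝓝 ((M : ℝ) * ψ y₁)) :=
              (continuous_const.mul hψcont).continuousAt
            rw [hψ0 y₁ (not_lt.mp hy), mul_zero] at h1
            refine squeeze_zero_norm ?_ h1
            intro y
            rw [Real.norm_eq_abs, hF1 y, abs_mul, abs_of_nonneg (hψ01 y).1, mul_comm]
            exact mul_le_mul_of_nonneg_right (hclampbd M y x) (hψ01 y).1
          unfold ContinuousAt
          rw [show (fun y => F M y x) y₁ = 0 from h0]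
          exact htend
      · have hzero : (fun y => F M y x) = fun _ => 0 := by
          funext y
          simp only [hFdef]
          rw [Set.indicator_of_notMem hx]
        rw [hzero]
        exact continuous_const
    have hFmeas : ∀ M : ℕ, Measurable fun q : Euc m × Euc n => F M q.2 q.1 := by
      intro M
      have h1 := measurable_uncurry_of_continuous_of_measurable (u := F M)
        (hFy M) (hFx M)
      exact h1.comp measurable_swap
    obtain ⟨T, hTdef⟩ : ∃ T : Euc m × Euc n → ℝ, T = fun q =>
      (ball x₀ (4 * R)).indicator
        (fun x' => ψ q.2 * (sliceY Ω q.2).indicator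
          (fun x'' => u (glue x'' q.2)) x') q.1 := ⟨_, rfl⟩
    have hTlim : ∀ q : Euc m × Euc n,
        Tendsto (fun M : ℕ => F M q.2 q.1) atTop (𝓝 (T q)) := by
      rintro ⟨qx, qy⟩
      by_cases hq1 : qx ∈ ball x₀ (4 * R)
      · simp only [hFdef, hTdef, Set.indicator_of_mem hq1]
        by_cases hq2 : qx ∈ sliceY Ω qy
        · simp only [Set.indicator_of_mem hq2]
          exact (tendsto_clamp (u (glue qx qy))).const_mul (ψ qy)
        · simp only [Set.indicator_of_notMem hq2, mul_zero]
          exact tendsto_const_nhds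
      · simp only [hFdef, hTdef, Set.indicator_of_notMem hq1]
        exact tendsto_const_nhds
    have hTmeas : Measurable T := by
      refine measurable_of_tendsto_metrizable (fun M => hFmeas M) ?_
      rw [tendsto_pi_nhds]
      exact hTlim
    refine ⟨T, hTmeas, ?_⟩
    rintro ⟨qx, qy⟩ hq1 hq2
    have hq2' : dist qy y₀ < 3 * R := mem_ball.mp hq2
    have hmem : qx ∈ sliceY Ω qy := by
      have hq1' := mem_ball.mp hq1
      exact hmemΩ qx qy (by linarith)
    simp only [hTdef, Set.indicator_of_mem hq1, Set.indicator_of_mem hmem,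
      hψ1 qy hq2', one_mul]
  -- STEP 2 : integrability of φ on the product of balls
  have hφprod : IntegrableOn (fun q : Euc m × Euc n => φ (glue q.1 q.2))
      (ball x₀ (2 * R) ×ˢ ball y₀ (2 * R)) (volume.prod volume) := by
    have hcomp : closedBall p₀ (5 * R) ⊆ Ω := fun q hq =>
      hΩR q (le_trans (mem_closedBall.mp hq) (by linarith))
    have h1 : IntegrableOn φ (closedBall p₀ (5 * R)) volume :=
      hφint.integrableOn_compact_subset hcomp (isCompact_closedBall _ _)
    have h2 := ((measurePreserving_glueEquiv m n).integrableOn_comp_preimage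
      (glueEquiv m n).measurableEmbedding).mpr h1
    have h3 : (fun q : Euc m × Euc n => φ (glue q.1 q.2)) = φ ∘ (glueEquiv m n) := by
      funext q
      simp [glueEquiv_apply]
    rw [h3]
    refine h2.mono_set ?_
    rintro ⟨qx, qy⟩ ⟨hqx, hqy⟩
    simp only [Set.mem_preimage, glueEquiv_apply]
    rw [mem_closedBall, ← hp₀eq]
    have h4 := dist_glue_le qx x₀ qy y₀
    have h5 := mem_ball.mp hqx
    have h6 := mem_ball.mp hqy
    linarith
  -- STEP 3 : the averaged function G
  set G : Euc m → ℝ := fun x' =>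
    ⨍ y' in ball y₀ (2 * R), max (u (glue x' y')) 0 with hGdef
  have hG0 : ∀ x', 0 ≤ G x' := fun x' => setAvg_nonneg _ (fun z => le_max_right _ _)
  have hGeq2 : ∀ x' ∈ ball x₀ (2 * R), G x' = (volume (ball y₀ (2 * R))).toReal⁻¹ *
      ∫ y' in ball y₀ (2 * R), max (T (x', y')) 0 := by
    intro x' hx'
    simp only [hGdef]
    rw [setAverage_eq, smul_eq_mul]
    congr 1
    refine setIntegral_congr_fun measurableSet_ball ?_
    intro y' hy'
    show max (u (glue x' y')) 0 = max (T (x', y')) 0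
    rw [hTeq (x', y') (ball_subset_ball (by linarith) hx')
      (ball_subset_ball (by linarith) hy')]
  have hGaesm : AEStronglyMeasurable G (volume.restrict (ball x₀ (2 * R))) := by
    have hTm2 : StronglyMeasurable fun q : Euc m × Euc n => max (T q) 0 :=
      (hTmeas.max measurable_const).stronglyMeasurable
    have hG' : StronglyMeasurable fun x' : Euc m =>
        ∫ y' in ball y₀ (2 * R), max (T (x', y')) 0 :=
      hTm2.integral_prod_right'
    refine ((hG'.measurable.const_mul
      ((volume (ball y₀ (2 * R))).toReal⁻¹)).aestronglyMeasurable).congr ?_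
    refine (ae_restrict_iff' measurableSet_ball).mpr (Eventually.of_forall ?_)
    intro x' hx'
    rw [hGeq2 x' hx']
  have hφprod' : Integrable (fun q : Euc m × Euc n => φ (glue q.1 q.2))
      ((volume.restrict (ball x₀ (2 * R))).prod (volume.restrict (ball y₀ (2 * R)))) := by
    rw [Measure.prod_restrict]
    exact hφprod
  have hGint : IntegrableOn G (ball x₀ (2 * R)) volume := by
    have hφae := hφprod'.prod_right_ae
    have hΦint : Integrable
        (fun x' => ∫ y' in ball y₀ (2 * R), φ (glue x' y'))
        (volume.restrict (ball x₀ (2 * R))) := hφprod'.integral_prod_left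
    have hsubY₀ : closedBall x₀ (2 * R) ⊆ sliceY Ω y₀ := by
      intro z hz
      exact hmemΩ z y₀ (by have := mem_closedBall.mp hz; simp only [dist_self]; linarith)
    have hup : IntegrableOn (fun x' => max (u (glue x' y₀)) 0) (ball x₀ (2 * R)) volume :=
      ((ha y₀).2.1.integrableOn_compact_subset hsubY₀
        (isCompact_closedBall _ _)).mono_set ball_subset_closedBall
    refine Integrable.mono'
      (g := fun x' => max (u (glue x' y₀)) 0 + (volume (ball y₀ (2 * R))).toReal⁻¹ *
        ∫ y' in ball y₀ (2 * R), φ (glue x' y')) (hup.add (hΦint.const_mul _)) hGaesm ?_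
    filter_upwards [hφae, (ae_restrict_iff' measurableSet_ball).mpr
      (Eventually.of_forall (fun x' (hx' : x' ∈ ball x₀ (2 * R)) => hx'))] with x' hφx' hx'
    rw [Real.norm_eq_abs, abs_of_nonneg (hG0 x')]
    have hdz : dist x' x₀ < 2 * R := mem_ball.mp hx'
    have hsubX : closedBall y₀ (2 * R) ⊆ sliceX Ω x' := by
      intro y' hy'
      exact hmemΩ x' y' (by have := mem_closedBall.mp hy'; linarith)
    have hMVP : u (glue x' y₀) = ⨍ y' in ball y₀ (2 * R), u (glue x' y') :=
      (hb x').2 y₀ (hsubX (mem_closedBall_self (by positivity))) (2 * R) (by positivity) hsubX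
    have huint : IntegrableOn (fun y' => u (glue x' y')) (ball y₀ (2 * R)) volume :=
      hslice_int x' y₀ (2 * R) hdz subset_rfl
    have h1 : G x' ≤ ⨍ y' in ball y₀ (2 * R), (u (glue x' y') + φ (glue x' y')) := by
      simp only [hGdef]
      refine setAvg_mono _ _ (Eventually.of_forall fun z => le_max_right _ _) ?_
        (huint.add hφx')
      refine (ae_restrict_iff' measurableSet_ball).mpr (Eventually.of_forall ?_)
      intro y' hy'
      have hΩy' : glue x' y' ∈ Ω := hsubX (ball_subset_closedBall hy')
      have h2 := hφ0 _ hΩy'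
      have h3 := hlow _ hΩy'
      show max (u (glue x' y')) 0 ≤ u (glue x' y') + φ (glue x' y')
      exact max_le (by linarith) (by linarith)
    have h2 : ⨍ y' in ball y₀ (2 * R), (u (glue x' y') + φ (glue x' y'))
        = u (glue x' y₀) + (volume (ball y₀ (2 * R))).toReal⁻¹ *
          ∫ y' in ball y₀ (2 * R), φ (glue x' y') := by
      rw [setAverage_eq, smul_eq_mul, integral_add huint hφx', hMVP, setAverage_eq, smul_eq_mul, measureReal_def]
      ring
    calc G x' ≤ _ := h1
      _ = _ := h2
      _ ≤ _ := add_le_add_left (le_max_left _ _) _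
  -- STEP 4 : the pointwise bound on ball p₀ R
  set C : ℝ := K * (2 ^ n * (2 ^ m * ⨍ x' in ball x₀ (2 * R), G x')) with hCdef
  have hbound : ∀ p ∈ ball p₀ R, max (u p) 0 ≤ C := by
    intro p hp
    set x : Euc m := ((glueEquiv m n).symm p).1 with hxdef
    set y : Euc n := ((glueEquiv m n).symm p).2 with hydef
    have hpeq : glue x y = p := by
      rw [← glueEquiv_apply]
      exact (glueEquiv m n).apply_symm_apply p
    have hdp : dist p p₀ < R := mem_ball.mp hp
    have hdx : dist x x₀ < R := by
      have := dist_left_le x x₀ y y₀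
      rw [hpeq, hp₀eq] at this
      linarith
    have hdy : dist y y₀ < R := by
      have := dist_right_le x x₀ y y₀
      rw [hpeq, hp₀eq] at this
      linarith
    -- pointwise bound on the x-ball via harmonicity in y
    have hstep2 : ∀ z ∈ ball x R, max (u (glue z y)) 0 ≤ 2 ^ n * G z := by
      intro z hz
      have hdz : dist z x₀ < 2 * R := by
        have h1 := mem_ball.mp hz
        have h2 := dist_triangle z x x₀
        linarith
      have hsubX : closedBall y R ⊆ sliceX Ω z := by
        intro y' hy'
        have h1 := mem_closedBall.mp hy'
        have h2 := dist_triangle y' y y₀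
        exact hmemΩ z y' (by linarith)
      have hMVP : u (glue z y) = ⨍ y' in ball y R, u (glue z y') :=
        (hb z).2 y (hsubX (mem_closedBall_self hR.le)) R hR hsubX
      have hsubcb : closedBall y R ⊆ closedBall y₀ (2 * R) := by
        intro y' hy'
        have h1 := mem_closedBall.mp hy'
        have h2 := dist_triangle y' y y₀
        exact mem_closedBall.mpr (by linarith)
      have huint := hslice_int z y R hdz hsubcb
      have hupint := hslice_int_pos z y R hdz hsubcb
      have h1 : max (u (glue z y)) 0 ≤ ⨍ y' in ball y R, max (u (glue z y')) 0 := by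
        rw [hMVP]
        refine max_le ?_ (setAvg_nonneg _ fun z' => le_max_right _ _)
        exact setAvg_mono2 _ _ huint hupint (fun z' => le_max_left _ _)
      have hsubb : ball y R ⊆ ball y₀ (2 * R) := by
        intro y' hy'
        have h1 := mem_ball.mp hy'
        have h2 := dist_triangle y' y y₀
        exact mem_ball.mpr (by linarith)
      have h2 : ⨍ y' in ball y R, max (u (glue z y')) 0 ≤
          2 ^ n * ⨍ y' in ball y₀ (2 * R), max (u (glue z y')) 0 :=
        setAvg_ball_le (by omega) y y₀ hR hsubb _ (fun z' => le_max_right _ _)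
          (hslice_int_pos z y₀ (2 * R) hdz subset_rfl)
      have h3 : (2 : ℝ) ^ n * ⨍ y' in ball y₀ (2 * R), max (u (glue z y')) 0 = 2 ^ n * G z := by
        simp only [hGdef]
      linarith
    -- the quasinearly-subharmonic inequality in x
    have hsubY : closedBall x R ⊆ sliceY Ω y := by
      intro z hz
      have h1 := mem_closedBall.mp hz
      have h2 := dist_triangle z x x₀
      exact hmemΩ z y (by linarith)
    have hQ := (ha y).2.2 0 le_rfl x (hsubY (mem_closedBall_self hR.le)) R hR hsubY
    simp only [neg_zero, add_zero] at hQ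
    have hGR : IntegrableOn G (ball x R) volume := by
      refine hGint.mono_set ?_
      intro z hz
      have h1 := mem_ball.mp hz
      have h2 := dist_triangle z x x₀
      exact mem_ball.mpr (by linarith)
    have h3 : ⨍ z in ball x R, max (u (glue z y)) 0 ≤ ⨍ z in ball x R, 2 ^ n * G z := by
      refine setAvg_mono _ _ (Eventually.of_forall fun z => le_max_right _ _) ?_
        (hGR.const_mul _)
      refine (ae_restrict_iff' measurableSet_ball).mpr (Eventually.of_forall ?_)
      intro z hz
      exact hstep2 z hz
    have h4 : ⨍ z in ball x R, (2 : ℝ) ^ n * G z = 2 ^ n * ⨍ z in ball x R, G z :=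
      setAvg_const_mul _ _
    have hsubb2 : ball x R ⊆ ball x₀ (2 * R) := by
      intro z hz
      have h1 := mem_ball.mp hz
      have h2 := dist_triangle z x x₀
      exact mem_ball.mpr (by linarith)
    have h5 : ⨍ z in ball x R, G z ≤ 2 ^ m * ⨍ x' in ball x₀ (2 * R), G x' :=
      setAvg_ball_le (by omega) x x₀ hR hsubb2 G hG0 hGint
    have h6 : ⨍ z in ball x R, max (u (glue z y)) 0 ≤
        2 ^ n * (2 ^ m * ⨍ x' in ball x₀ (2 * R), G x') := by
      rw [h4] at h3
      have := mul_le_mul_of_nonneg_left h5 (by positivity : (0:ℝ) ≤ 2 ^ n)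
      linarith
    rw [← hpeq]
    calc max (u (glue x y)) 0 ≤ K * ⨍ z in ball x R, max (u (glue z y)) 0 := hQ
      _ ≤ K * (2 ^ n * (2 ^ m * ⨍ x' in ball x₀ (2 * R), G x')) :=
          mul_le_mul_of_nonneg_left h6 hK0
      _ = C := by rw [hCdef]
  -- STEP 5 : conclusion
  have haesm : AEStronglyMeasurable (fun p => max (u p) 0)
      (volume.restrict (ball p₀ R)) := by
    have hTm' : Measurable fun p : Euc (m + n) =>
        max (T ((glueEquiv m n).symm p)) 0 :=
      (hTmeas.comp (glueEquiv m n).symm.measurable).max measurable_const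
    refine hTm'.aestronglyMeasurable.congr ?_
    refine (ae_restrict_iff' measurableSet_ball).mpr (Eventually.of_forall ?_)
    intro p hp
    have hpeq : glue ((glueEquiv m n).symm p).1 ((glueEquiv m n).symm p).2 = p := by
      rw [← glueEquiv_apply]
      exact (glueEquiv m n).apply_symm_apply p
    have hdp : dist p p₀ < R := mem_ball.mp hp
    have hd1 : ((glueEquiv m n).symm p).1 ∈ ball x₀ (4 * R) := by
      have := dist_left_le ((glueEquiv m n).symm p).1 x₀ ((glueEquiv m n).symm p).2 y₀
      rw [hpeq, hp₀eq] at this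
      exact mem_ball.mpr (by linarith)
    have hd2 : ((glueEquiv m n).symm p).2 ∈ ball y₀ (3 * R) := by
      have := dist_right_le ((glueEquiv m n).symm p).1 x₀ ((glueEquiv m n).symm p).2 y₀
      rw [hpeq, hp₀eq] at this
      exact mem_ball.mpr (by linarith)
    show max (T ((glueEquiv m n).symm p)) 0 = max (u p) 0
    rw [hTeq _ hd1 hd2, hpeq]
  have hint : IntegrableOn (fun p => max (u p) 0) (ball p₀ R) volume := by
    refine Integrable.mono' (g := fun _ => C)
      (integrableOn_const measure_ball_lt_top.ne) haesm ?_
    refine (ae_restrict_iff' measurableSet_ball).mpr (Eventually.of_forall ?_)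
    intro p hp
    rw [Real.norm_eq_abs, abs_of_nonneg (le_max_right _ _)]
    exact hbound p hp
  exact ⟨ball p₀ R, mem_nhdsWithin_of_mem_nhds (ball_mem_nhds p₀ hR), hint⟩
end
end

section
/- Let u : B̄^m(x_0,r_1) × B̄^n(y_0,r_2) → ℝ be such that u(·,y) is subharmonic and continuous for each y and u(x,·) is harmonic for each x. Fix x and r > 0 such that u is uniformly bounded on B̄^m(x,r) × B^n(y_0,r_2). Then the function y ↦ Δ_{1r}u(x,y) := (2(m+2)/r²)·[ (1/(ν_m r^m)) ∫_{B^m(x,r)} u(x',y) dλ_m(x') − u(x,y) ] is nonnegative, continuous, and harmonic on B^n(y_0,r_2). -/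
open MeasureTheory Metric Filter Topology
open scoped ENNReal

noncomputable section

def projBall {d : ℕ} (c : Euc d) (ρ : ℝ) (z : Euc d) : Euc d :=
  c + (ρ / max ρ (dist z c)) • (z - c)
lemma projBall_continuous {d : ℕ} (c : Euc d) {ρ : ℝ} (hρ : 0 < ρ) :
    Continuous (projBall c ρ) := by
  have h : ∀ z : Euc d, max ρ (dist z c) ≠ 0 := fun z =>
    ne_of_gt (lt_max_of_lt_left hρ)
  exact continuous_const.add
    (((continuous_const.div (continuous_const.max (continuous_id.dist continuous_const)) h)).smul
      (continuous_id.sub continuous_const))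
lemma projBall_mem {d : ℕ} (c : Euc d) {ρ : ℝ} (hρ : 0 < ρ) (z : Euc d) :
    projBall c ρ z ∈ closedBall c ρ := by
  have hmax : 0 < max ρ (dist z c) := lt_max_of_lt_left hρ
  have : dist (projBall c ρ z) c = (ρ / max ρ (dist z c)) * dist z c := by
    rw [projBall, dist_eq_norm]
    have : c + (ρ / max ρ (dist z c)) • (z - c) - c = (ρ / max ρ (dist z c)) • (z - c) := by
      abel
    rw [this, norm_smul, Real.norm_eq_abs, abs_of_nonneg (by positivity), ← dist_eq_norm]
  rw [mem_closedBall, this, div_mul_eq_mul_div, div_le_iff₀ hmax]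
  exact mul_le_mul_of_nonneg_left (le_max_right _ _) hρ.le
lemma projBall_eq_self {d : ℕ} (c : Euc d) {ρ : ℝ} (hρ : 0 < ρ) {z : Euc d}
    (hz : z ∈ closedBall c ρ) : projBall c ρ z = z := by
  rw [mem_closedBall] at hz
  rw [projBall, max_eq_left hz, div_self hρ.ne', one_smul]
  abel

/-- Step 2 of Theorem 2: the Blaschke–Privalov difference quotient
`Δ_{1r}u(x,·)` is nonnegative, continuous and harmonic on `B^n(y₀,r₂)`, given the
uniform bound on `u` over `closedBall x r × B^n(y₀,r₂)`. -/
theorem stmt8 {m n : ℕ} (hm : 2 ≤ m) (hn : 2 ≤ n)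
    (x₀ : Euc m) (y₀ : Euc n) (r₁ r₂ : ℝ) (hr₁ : 0 < r₁) (hr₂ : 0 < r₂)
    (u : Euc (m + n) → ℝ)
    (ha : ∀ y ∈ closedBall y₀ r₂,
      ContinuousOn (fun x => u (glue x y)) (closedBall x₀ r₁) ∧
      IsSubharmonicOn (ball x₀ r₁) (fun x => u (glue x y)))
    (hb : ∀ x ∈ closedBall x₀ r₁, IsHarmonicOn (ball y₀ r₂) (fun y => u (glue x y)))
    (x : Euc m) (hx : x ∈ ball x₀ r₁) (r : ℝ) (hr : 0 < r)
    (hxr : closedBall x r ⊆ ball x₀ r₁)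
    (hbdd : ∃ C : ℝ, ∀ x' ∈ closedBall x r, ∀ y ∈ ball y₀ r₂, |u (glue x' y)| ≤ C) :
    (∀ y ∈ ball y₀ r₂, 0 ≤
        (2 * ((m : ℝ) + 2) / r ^ 2) * ((⨍ x' in ball x r, u (glue x' y)) - u (glue x y))) ∧
    ContinuousOn (fun y => (2 * ((m : ℝ) + 2) / r ^ 2) *
        ((⨍ x' in ball x r, u (glue x' y)) - u (glue x y))) (ball y₀ r₂) ∧
    IsHarmonicOn (ball y₀ r₂) (fun y => (2 * ((m : ℝ) + 2) / r ^ 2) *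
        ((⨍ x' in ball x r, u (glue x' y)) - u (glue x y))) := by
  obtain ⟨C, hC⟩ := hbdd
  set k : ℝ := 2 * ((m : ℝ) + 2) / r ^ 2 with hk_def
  have hk : 0 ≤ k := by positivity
  have hxcb : x ∈ closedBall x₀ r₁ := ball_subset_closedBall hx
  have hxrsub : ball x r ⊆ closedBall x₀ r₁ :=
    (ball_subset_closedBall.trans hxr).trans ball_subset_closedBall
  have hxrsub' : closedBall x r ⊆ closedBall x₀ r₁ := hxr.trans ball_subset_closedBall
  have hxmem : x ∈ closedBall x r := mem_closedBall_self hr.le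
  haveI : IsFiniteMeasure (volume.restrict (ball x r)) :=
    ⟨by rw [Measure.restrict_apply_univ]; exact measure_ball_lt_top⟩
  -- The slice functions
  set G : Euc n → ℝ := fun y => ⨍ x' in ball x r, u (glue x' y) with hG_def
  set H : Euc n → ℝ := fun y => u (glue x y) with hH_def
  -- nonnegativity
  have h1 : ∀ y ∈ ball y₀ r₂, H y ≤ G y := fun y hy =>
    (ha y (ball_subset_closedBall hy)).2.2 x hx r hr hxr
  -- continuity of H
  have hHcont : ContinuousOn H (ball y₀ r₂) := (hb x hxcb).1
  -- continuity of the integral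
  have hIcont : ∀ y ∈ ball y₀ r₂,
      ContinuousAt (fun y' => ∫ x' in ball x r, u (glue x' y')) y := by
    intro y hy
    apply continuousAt_of_dominated (bound := fun _ => C)
    · filter_upwards [isOpen_ball.mem_nhds hy] with y' hy'
      exact ((ha y' (ball_subset_closedBall hy')).1.mono hxrsub).aestronglyMeasurable
        measurableSet_ball
    · filter_upwards [isOpen_ball.mem_nhds hy] with y' hy'
      refine (ae_restrict_iff' measurableSet_ball).2 (Eventually.of_forall fun x' hx' => ?_)
      rw [Real.norm_eq_abs]
      exact hC x' (ball_subset_closedBall hx') y' hy'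
    · exact integrable_const C
    · refine (ae_restrict_iff' measurableSet_ball).2 (Eventually.of_forall fun x' hx' => ?_)
      exact ((hb x' (hxrsub (by exact hx'))).1).continuousAt (isOpen_ball.mem_nhds hy)
  have hGcont : ContinuousOn G (ball y₀ r₂) := by
    intro y hy
    have : ContinuousAt G y := by
      have := (hIcont y hy).const_smul ((volume (ball x r)).toReal⁻¹)
      simp only [hG_def, setAverage_eq, measureReal_def]
      exact this
    exact this.continuousWithinAt
  refine ⟨fun y hy => mul_nonneg hk (sub_nonneg.2 (h1 y hy)),
    continuousOn_const.mul (hGcont.sub hHcont),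
    continuousOn_const.mul (hGcont.sub hHcont), ?_⟩
  -- mean value property
  intro c hc s hs hcs
  haveI : IsFiniteMeasure (volume.restrict (ball c s)) :=
    ⟨by rw [Measure.restrict_apply_univ]; exact measure_ball_lt_top⟩
  have hcsball : closedBall c s ⊆ ball y₀ r₂ := hcs
  have hcsball' : ball c s ⊆ ball y₀ r₂ := ball_subset_closedBall.trans hcs
  -- the modified function w
  set P₁ : Euc m → Euc m := projBall x r with hP₁
  set P₂ : Euc n → Euc n := projBall c s with hP₂
  set w : Euc m → Euc n → ℝ := fun x' y => u (glue (P₁ x') (P₂ y)) with hw_def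
  have hweq : ∀ x' ∈ closedBall x r, ∀ y ∈ closedBall c s, w x' y = u (glue x' y) := by
    intro x' hx' y hy
    simp only [hw_def, hP₁, hP₂, projBall_eq_self x hr hx', projBall_eq_self c hs hy]
  have hwcont_x : ∀ y : Euc n, Continuous fun x' => w x' y := by
    intro y
    have h2 : P₂ y ∈ closedBall y₀ r₂ :=
      ball_subset_closedBall (hcsball (projBall_mem c hs y))
    exact ((ha (P₂ y) h2).1).comp_continuous (projBall_continuous x hr)
      (fun x' => hxrsub' (projBall_mem x hr x'))
  have hwcont_y : ∀ x' : Euc m, Continuous fun y => w x' y := by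
    intro x'
    have h1 : P₁ x' ∈ closedBall x₀ r₁ := hxrsub' (projBall_mem x hr x')
    exact ((hb (P₁ x') h1).1).comp_continuous (projBall_continuous c hs)
      (fun y => hcsball (projBall_mem c hs y))
  have hwmeas : Measurable (Function.uncurry w) :=
    measurable_uncurry_of_continuous_of_measurable hwcont_x fun x' => (hwcont_y x').measurable
  have hwbdd : ∀ x' y, |w x' y| ≤ C := fun x' y =>
    hC (P₁ x') (projBall_mem x hr x') (P₂ y) (hcsball (projBall_mem c hs y))
  have hwint : Integrable (Function.uncurry w)
      ((volume.restrict (ball x r)).prod (volume.restrict (ball c s))) := by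
    refine Integrable.mono' (integrable_const C) hwmeas.aestronglyMeasurable
      (Eventually.of_forall fun p => ?_)
    rw [Real.norm_eq_abs]
    exact hwbdd p.1 p.2
  have hswap : ∫ x' in ball x r, ∫ y in ball c s, w x' y = ∫ y in ball c s, ∫ x' in ball x r, w x' y :=
    integral_integral_swap hwint
  set v₁ : ℝ := (volume (ball x r)).toReal⁻¹ with hv₁
  set v₂ : ℝ := (volume (ball c s)).toReal⁻¹ with hv₂
  -- G c in terms of the double integral
  have hGc : G c = v₁ * (v₂ * ∫ x' in ball x r, ∫ y in ball c s, w x' y) := by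
    have hint : ∫ x' in ball x r, u (glue x' c)
        = ∫ x' in ball x r, v₂ * ∫ y in ball c s, w x' y := by
      refine setIntegral_congr_fun measurableSet_ball fun x' hx' => ?_
      have hx'cb : x' ∈ closedBall x r := ball_subset_closedBall hx'
      have hmv : u (glue x' c) = ⨍ y in ball c s, u (glue x' y) :=
        (hb x' (hxrsub' hx'cb)).2 c hc s hs hcs
      have : (⨍ y in ball c s, u (glue x' y)) = v₂ * ∫ y in ball c s, w x' y := by
        rw [setAverage_eq, smul_eq_mul]
        congr 1
        refine setIntegral_congr_fun measurableSet_ball fun y hy => ?_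
        exact (hweq x' hx'cb y (ball_subset_closedBall hy)).symm
      rw [hmv, this]
    rw [hG_def]
    simp only [setAverage_eq, smul_eq_mul, measureReal_def, ← hv₁]
    rw [hint, integral_const_mul]
  -- average of G over ball c s
  have hGavg : (⨍ y in ball c s, G y) = v₂ * (v₁ * ∫ y in ball c s, ∫ x' in ball x r, w x' y) := by
    have hint : ∫ y in ball c s, G y
        = ∫ y in ball c s, v₁ * ∫ x' in ball x r, w x' y := by
      refine setIntegral_congr_fun measurableSet_ball fun y hy => ?_
      rw [hG_def]
      simp only [setAverage_eq, smul_eq_mul, measureReal_def, ← hv₁]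
      congr 1
      refine setIntegral_congr_fun measurableSet_ball fun x' hx' => ?_
      exact (hweq x' (ball_subset_closedBall hx') y (ball_subset_closedBall hy)).symm
    rw [setAverage_eq, smul_eq_mul, measureReal_def, ← hv₂, hint, integral_const_mul]
  have hGmv : G c = ⨍ y in ball c s, G y := by
    rw [hGc, hGavg, hswap]; ring
  have hHmv : H c = ⨍ y in ball c s, H y := (hb x hxcb).2 c hc s hs hcs
  -- uniform bounds on G and H
  have hvol₁ : 0 < (volume (ball x r)).toReal :=
    ENNReal.toReal_pos (measure_ball_pos volume x hr).ne' measure_ball_lt_top.ne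
  have hGbdd : ∀ y ∈ ball y₀ r₂, |G y| ≤ C := by
    intro y hy
    rw [hG_def]
    simp only [setAverage_eq, smul_eq_mul, measureReal_def]
    rw [abs_mul, abs_of_nonneg (inv_nonneg.2 ENNReal.toReal_nonneg)]
    have hb1 : |∫ x' in ball x r, u (glue x' y)| ≤ C * (volume (ball x r)).toReal := by
      rw [← Real.norm_eq_abs]
      refine norm_setIntegral_le_of_norm_le_const measure_ball_lt_top (fun x' hx' => ?_)
      rw [Real.norm_eq_abs]
      exact hC x' (ball_subset_closedBall hx') y hy
    calc (volume (ball x r)).toReal⁻¹ * |∫ x' in ball x r, u (glue x' y)|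
        ≤ (volume (ball x r)).toReal⁻¹ * (C * (volume (ball x r)).toReal) :=
          mul_le_mul_of_nonneg_left hb1 (inv_nonneg.2 ENNReal.toReal_nonneg)
      _ = C := by field_simp
  have hHbdd : ∀ y ∈ ball y₀ r₂, |H y| ≤ C := fun y hy => hC x hxmem y hy
  -- integrability of G and H on ball c s
  have hGint : IntegrableOn G (ball c s) := by
    refine Integrable.mono' (integrable_const C)
      ((hGcont.mono hcsball').aestronglyMeasurable measurableSet_ball)
      ((ae_restrict_iff' measurableSet_ball).2 (Eventually.of_forall fun y hy => ?_))
    rw [Real.norm_eq_abs]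
    exact hGbdd y (hcsball' hy)
  have hHint : IntegrableOn H (ball c s) := by
    refine Integrable.mono' (integrable_const C)
      ((hHcont.mono hcsball').aestronglyMeasurable measurableSet_ball)
      ((ae_restrict_iff' measurableSet_ball).2 (Eventually.of_forall fun y hy => ?_))
    rw [Real.norm_eq_abs]
    exact hHbdd y (hcsball' hy)
  -- conclude the mean value property for the difference quotient
  show k * (G c - H c) = ⨍ y in ball c s, k * (G y - H y)
  have hlin : (⨍ y in ball c s, k * (G y - H y))
      = k * ((⨍ y in ball c s, G y) - ⨍ y in ball c s, H y) := by
    simp only [setAverage_eq, smul_eq_mul, measureReal_def, ← hv₂]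
    rw [integral_const_mul, integral_sub hGint hHint]
    ring
  rw [hlin, ← hGmv, ← hHmv]
end
end
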